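/- The generic (structural) rank of a structured matrix equals the size of a maximum matching in its associated bipartite graph. -/

import Mathlib

/-- A structured `m×n` matrix is given by a zero/free pattern
`P : Fin m → Fin n → Bool`; a realization vanishes on the fixed zeros. -/
def Realizes {m n : ℕ} (P : Fin m → Fin n → Bool)
    (A : Matrix (Fin m) (Fin n) ℝ) : Prop :=
  ∀ i j, P i j = false → A i j = 0

/-- Edge set of the bipartite graph of the pattern: `(i, j)` is an edge iff
entry `(i, j)` is a free parameter. -/
def patternEdges {m n : ℕ} (P : Fin m → Fin n → Bool) :
    Finset (Fin m × Fin n) :=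
  Finset.univ.filter fun p => P p.1 p.2 = true

/-- `M` is a matching in the bipartite graph with edge set `E`. -/
def IsMatching {m n : ℕ} (E M : Finset (Fin m × Fin n)) : Prop :=
  M ⊆ E ∧ ∀ e ∈ M, ∀ f ∈ M, (e.1 = f.1 ∨ e.2 = f.2) → e = f

/-!
A realization `A` of rank `r` has a nonsingular `r × r` submatrix. Some term of the Leibniz
expansion of its determinant is nonzero, and the positions of that term are `r` free entries in
pairwise distinct rows and columns, i.e. a matching of size `r`. Conversely, the `0/1` matrix
supported on a maximum matching `M` realizes the pattern and contains the identity matrix of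
size `|M|` as a submatrix, so its rank is `|M|`.
-/

open Matrix Function

namespace Matrix

theorem exists_linearIndependent_col_comp {m n K : Type*} [Fintype m] [Fintype n] [Field K]
    {r : ℕ}
    (A : Matrix m n K) (hr : A.rank = r) :
    ∃ c : Fin r → n, LinearIndependent K (A.col ∘ c) := by
  rw [← hr, rank_eq_finrank_span_cols]
  obtain ⟨v, hv_mem, -, hv⟩ := Submodule.exists_fun_fin_finrank_span_eq K (Set.range A.col)
  choose c hc using hv_mem
  exact ⟨c, by rwa [show A.col ∘ c = v from funext hc]⟩

theorem exists_submatrix_det_ne_zero {m n K : Type*} [Fintype m] [Fintype n] [Field K]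
    (A : Matrix m n K) :
    ∃ (f : Fin A.rank → m) (g : Fin A.rank → n),
      Injective f ∧ Injective g ∧ (A.submatrix f g).det ≠ 0 := by
  obtain ⟨g, hg⟩ := A.exists_linearIndependent_col_comp rfl
  have hrank : (A.submatrix id g)ᵀ.rank = A.rank := by
    simpa using LinearIndependent.rank_matrix (M := (A.submatrix id g)ᵀ) hg
  obtain ⟨f, hf⟩ := (A.submatrix id g)ᵀ.exists_linearIndependent_col_comp hrank
  have hrows : LinearIndependent K (A.submatrix f g).row := hf
  refine ⟨f, g, hf.injective.of_comp, hg.injective.of_comp, ?_⟩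
  rw [← isUnit_iff_ne_zero, ← isUnit_iff_isUnit_det]
  exact linearIndependent_rows_iff_isUnit.mp hrows

theorem exists_perm_forall_ne_zero_of_det_ne_zero {ι R : Type*} [Fintype ι]
    [DecidableEq ι] [CommRing R] {C : Matrix ι ι R} (h : C.det ≠ 0) :
    ∃ σ : Equiv.Perm ι, ∀ k, C (σ k) k ≠ 0 := by
  contrapose! h
  rw [det_apply]
  refine Finset.sum_eq_zero fun σ _ => ?_
  obtain ⟨k, hk⟩ := h σ
  rw [Finset.prod_eq_zero (f := fun i => C (σ i) i) (Finset.mem_univ k) hk, smul_zero]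

end Matrix

section Matching

variable {m n : ℕ}

theorem exists_isMatching_forall_card_le (E : Finset (Fin m × Fin n)) :
    ∃ M, IsMatching E M ∧ ∀ M', IsMatching E M' → M'.card ≤ M.card :=
  Set.exists_max_image {M | IsMatching E M} Finset.card (Set.toFinite _)
    ⟨∅, Finset.empty_subset E, by simp⟩

theorem isMatching_image_of_injective {ι : Type*} [Fintype ι] {E : Finset (Fin m × Fin n)}
    {u : ι → Fin m} {v : ι → Fin n} (hu : Injective u) (hv : Injective v)
    (hE : ∀ k, (u k, v k) ∈ E) : IsMatching E (Finset.univ.image fun k => (u k, v k)) := by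
  refine ⟨fun e he => ?_, ?_⟩
  · obtain ⟨k, -, rfl⟩ := Finset.mem_image.mp he
    exact hE k
  · simp only [Finset.mem_image, Finset.mem_univ, true_and]
    rintro _ ⟨k, rfl⟩ _ ⟨l, rfl⟩ (h | h)
    · rw [hu h]
    · rw [hv h]

theorem IsMatching.mk_mem_iff {E M : Finset (Fin m × Fin n)} (hM : IsMatching E M)
    {p q : Fin m × Fin n} (hp : p ∈ M) (hq : q ∈ M) : (p.1, q.2) ∈ M ↔ p = q := by
  refine ⟨fun h => ?_, fun h => h ▸ hp⟩
  exact (hM.2 _ h _ hp (Or.inl rfl)).symm.trans (hM.2 _ h _ hq (Or.inr rfl))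

end Matching

section Pattern

variable {m n : ℕ} {P : Fin m → Fin n → Bool}

theorem mem_patternEdges_of_realizes {A : Matrix (Fin m) (Fin n) ℝ} (hA : Realizes P A)
    {i : Fin m} {j : Fin n} (hij : A i j ≠ 0) : (i, j) ∈ patternEdges P := by
  simp only [patternEdges, Finset.mem_filter, Finset.mem_univ, true_and]
  by_contra h
  exact hij (hA i j (by simpa using h))

theorem exists_isMatching_rank_le_card {A : Matrix (Fin m) (Fin n) ℝ} (hA : Realizes P A) :
    ∃ M, IsMatching (patternEdges P) M ∧ A.rank ≤ M.card := by
  obtain ⟨f, g, hf, hg, hdet⟩ := A.exists_submatrix_det_ne_zero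
  obtain ⟨σ, hσ⟩ := exists_perm_forall_ne_zero_of_det_ne_zero hdet
  refine ⟨_, isMatching_image_of_injective (hf.comp σ.injective) hg
    fun k => mem_patternEdges_of_realizes hA (hσ k), ?_⟩
  rw [Finset.card_image_of_injective _ fun k l h => hg (congrArg Prod.snd h)]
  simp

end Pattern

def matchingMatrix {m n : ℕ} (K : Type*) [Zero K] [One K] (M : Finset (Fin m × Fin n)) :
    Matrix (Fin m) (Fin n) K :=
  of fun i j => if (i, j) ∈ M then 1 else 0

theorem realizes_matchingMatrix {m n : ℕ} {P : Fin m → Fin n → Bool}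
    {M : Finset (Fin m × Fin n)} (hM : M ⊆ patternEdges P) :
    Realizes P (matchingMatrix ℝ M) := by
  intro i j hP
  have : (i, j) ∉ M := fun h => by simpa [patternEdges, hP] using hM h
  simp [matchingMatrix, this]

theorem IsMatching.card_le_rank_matchingMatrix {m n : ℕ} {K : Type*} [Field K]
    {E M : Finset (Fin m × Fin n)} (hM : IsMatching E M) :
    M.card ≤ (matchingMatrix K M).rank := by
  let e : Fin M.card ≃ M := M.equivFin.symm
  have hid : (matchingMatrix K M).submatrix (fun k => (e k).1.1) (fun k => (e k).1.2) = 1 := by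
    ext k l
    simp [matchingMatrix, one_apply, hM.mk_mem_iff (e k).2 (e l).2, Subtype.ext_iff.symm,
      e.injective.eq_iff]
  calc M.card = (1 : Matrix (Fin M.card) (Fin M.card) K).rank := by simp
    _ ≤ (matchingMatrix K M).rank := hid ▸ rank_submatrix_le _ _ _

/-- The generic (structural) rank of a structured matrix equals the size of a
maximum matching in its associated bipartite graph: there is a maximum
matching `M` such that some realization attains rank `|M|`, and every
realization has rank at most `|M|`. -/
theorem generic_rank_eq_max_matching
    {m n : ℕ} (P : Fin m → Fin n → Bool) :
    ∃ M : Finset (Fin m × Fin n), IsMatching (patternEdges P) M ∧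
      (∀ M', IsMatching (patternEdges P) M' → M'.card ≤ M.card) ∧
      (∃ A, Realizes P A ∧ A.rank = M.card) ∧
      (∀ A, Realizes P A → A.rank ≤ M.card) := by
  obtain ⟨M, hM, hmax⟩ := exists_isMatching_forall_card_le (patternEdges P)
  have rank_le : ∀ A, Realizes P A → A.rank ≤ M.card := fun A hA =>
    let ⟨M', hM', hle⟩ := exists_isMatching_rank_le_card hA
    hle.trans (hmax M' hM')
  have hreal := realizes_matchingMatrix hM.1
  exact ⟨M, hM, hmax, ⟨_, hreal, (rank_le _ hreal).antisymm hM.card_le_rank_matchingMatrix⟩,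
    rank_le⟩
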